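/- The risk of the projection estimator admits the decomposition E[‖s − ŝ‖²_η] = ‖s − s^⊥‖²_η + E[χ²], and moreover E[χ²] ≤ ‖s‖_∞ · d / T, where ‖s‖_∞ is the (essential) supremum of s on D. -/

import Mathlib

/-! Both claims reduce to the coordinates of `ŝ - s^⊥` in the orthonormal basis. With
`βᵢ = ∫_D φᵢ s dη`, we have `χ² = ∑ᵢ (β̂ᵢ - βᵢ)²`, and Pythagoras in `L²(D, η)` gives
`‖s - ŝ‖² = ‖s - s^⊥‖² + χ²` for every outcome; integrating gives the decomposition.

For the bound, `T β̂ᵢ = ∫ f dJ` with `f(t, x) = 1_{[0,T] × D}(t, x) φᵢ(x)`, whose mean measure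
integrals are `∫ f dμ = T βᵢ` and `∫ f² dμ = T ∫_D φᵢ² s dη ≤ T ‖s‖_∞`. Campbell's second
moment bound `E (∫ f dJ - ∫ f dμ)² ≤ ∫ f² dμ` then gives `E (β̂ᵢ - βᵢ)² ≤ ‖s‖_∞ / T`. For
simple `f` that bound is an equality, since the counts of `J` on the disjoint level sets of `f`
are independent Poisson variables whose variance equals their mean; it passes to general `f`
through the simple approximations of `f` and Fatou's lemma. -/

open MeasureTheory ProbabilityTheory Set Filter

noncomputable section

/-- `N` is a Poisson random measure on `V` with mean measure `μ`, on the probability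
space `(Ω, P)`: for every measurable set `A` of finite mean measure, `N · A` is
Poisson distributed with mean `μ A`, and the values on pairwise disjoint sets are
independent. -/
def IsPoissonRandomMeasure {Ω V : Type*} [MeasurableSpace Ω] [MeasurableSpace V]
    (P : Measure Ω) (N : Ω → Measure V) (μ : Measure V) : Prop :=
  (∀ A : Set V, MeasurableSet A → Measurable fun ω => N ω A) ∧
  (∀ A : Set V, MeasurableSet A → μ A < ⊤ → ∀ k : ℕ,
      P {ω | N ω A = k} = ENNReal.ofReal (poissonPMFReal (μ A).toNNReal k)) ∧
  (∀ (n : ℕ) (A : Fin n → Set V), (∀ i, MeasurableSet (A i)) →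
      (Pairwise fun i j => Disjoint (A i) (A j)) →
      iIndepFun (fun i ω => N ω (A i)) P)

/-- The mean measure `μ(dt,dx) = s(x) dt η(dx)` on `[0,T] × D`. -/
def levyMeanMeasure (T : ℝ) (D : Set ℝ) (η : Measure ℝ) (s : ℝ → ℝ) : Measure (ℝ × ℝ) :=
  (volume.restrict (Icc 0 T)).prod ((η.restrict D).withDensity fun x => ENNReal.ofReal (s x))

open Real Topology
open scoped NNReal ENNReal

namespace ProbabilityTheory

lemma hasSum_poissonMeasure_mul_natCast (r : ℝ≥0) :
    HasSum (fun n : ℕ => exp (-r) * r ^ n / n.factorial * n) r := by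
  have hshift : ∀ n : ℕ, exp (-r) * r ^ (n + 1) / (n + 1).factorial * ((n + 1 : ℕ) : ℝ)
      = r * (exp (-r) * r ^ n / n.factorial) := fun n => by
    rw [Nat.factorial_succ]; push_cast; field_simp; ring
  refine (hasSum_nat_add_iff' 1).mp ?_
  simpa [← hshift] using (hasSum_one_poissonMeasure r).mul_left (r : ℝ)

lemma hasSum_poissonMeasure_mul_natCast_sq (r : ℝ≥0) :
    HasSum (fun n : ℕ => exp (-r) * r ^ n / n.factorial * n ^ 2) (r + r ^ 2) := by
  set f : ℕ → ℝ := fun n => exp (-r) * r ^ n / n.factorial * (n * (n - 1))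
  have hshift : ∀ n : ℕ, r ^ 2 * (exp (-r) * r ^ n / n.factorial) = f (n + 2) := fun n => by
    simp only [f, Nat.factorial_succ]; push_cast; field_simp; ring
  have hfalling : HasSum f (r ^ 2) := by
    have h := (hasSum_one_poissonMeasure r).mul_left ((r : ℝ) ^ 2)
    simp only [hshift, mul_one] at h
    have hf01 : ∑ i ∈ Finset.range 2, f i = 0 := by simp [f, Finset.sum_range_succ]
    exact (hasSum_nat_add_iff' 2).mp (by rwa [hf01, sub_zero])
  convert (hasSum_poissonMeasure_mul_natCast r).add hfalling using 1
  ext n; ring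

lemma integrable_natCast_sq_poissonMeasure (r : ℝ≥0) :
    Integrable (fun n : ℕ => (n : ℝ) ^ 2) Po(r) :=
  integrable_poissonMeasure_iff.2 (by simpa using (hasSum_poissonMeasure_mul_natCast_sq r).summable)

lemma memLp_natCast_poissonMeasure (r : ℝ≥0) : MemLp (fun n : ℕ => (n : ℝ)) 2 Po(r) :=
  (memLp_two_iff_integrable_sq .of_discrete).2 (integrable_natCast_sq_poissonMeasure r)

lemma integral_natCast_poissonMeasure (r : ℝ≥0) : ∫ n, (n : ℝ) ∂Po(r) = r := by
  simpa [integral_poissonMeasure] using (hasSum_poissonMeasure_mul_natCast r).tsum_eq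

lemma integral_natCast_sq_poissonMeasure (r : ℝ≥0) : ∫ n, (n : ℝ) ^ 2 ∂Po(r) = r + r ^ 2 := by
  simpa [integral_poissonMeasure] using (hasSum_poissonMeasure_mul_natCast_sq r).tsum_eq

lemma variance_natCast_poissonMeasure (r : ℝ≥0) : Var[fun n : ℕ => (n : ℝ); Po(r)] = r := by
  rw [variance_eq_sub (memLp_natCast_poissonMeasure r)]
  simp only [Pi.pow_apply, integral_natCast_sq_poissonMeasure, integral_natCast_poissonMeasure]
  ring

lemma lintegral_natCast_poissonMeasure (r : ℝ≥0) : ∫⁻ n, (n : ℝ≥0∞) ∂Po(r) = r := by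
  have h := ofReal_integral_eq_lintegral_ofReal
    ((memLp_natCast_poissonMeasure r).integrable one_le_two) (ae_of_all _ fun n => n.cast_nonneg)
  simpa [integral_natCast_poissonMeasure] using h.symm

lemma hasLaw_map_natCast_of_measure_eq {Ω : Type*} [MeasurableSpace Ω] {P : Measure Ω}
    [IsProbabilityMeasure P] {X : Ω → ℝ≥0∞} (hX : Measurable X) {ν : Measure ℕ}
    [IsProbabilityMeasure ν] (h : ∀ n : ℕ, P {ω | X ω = n} = ν {n}) :
    HasLaw X (ν.map Nat.cast) P := by
  have hcast : MeasurableEmbedding (Nat.cast : ℕ → ℝ≥0∞) :=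
    ⟨Nat.cast_injective, measurable_from_nat, fun s _ => (s.to_countable.image _).measurableSet⟩
  have hν : (P.map X).comap Nat.cast = ν := Measure.ext_of_singleton fun n => by
    rw [hcast.comap_apply, image_singleton, Measure.map_apply hX (measurableSet_singleton _)]
    exact h n
  -- The law of `X` seen on `ℕ` already has total mass one, so nothing is left off `ℕ`.
  have := Measure.isProbabilityMeasure_map (μ := P) hX.aemeasurable
  have := Measure.isProbabilityMeasure_map (μ := ν) hcast.measurable.aemeasurable
  refine ⟨hX.aemeasurable, (Measure.eq_of_le_of_isProbabilityMeasure ?_).symm⟩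
  rw [← hν, hcast.map_comap]
  exact Measure.restrict_le_self

lemma hasLaw_toReal_map_natCast {ν : Measure ℕ} :
    HasLaw ENNReal.toReal (ν.map (Nat.cast : ℕ → ℝ)) (ν.map (Nat.cast : ℕ → ℝ≥0∞)) := by
  refine ⟨by fun_prop, ?_⟩
  rw [Measure.map_map (by fun_prop) measurable_from_nat]
  rfl

end ProbabilityTheory

lemma tendsto_integral_sq_approxOn {V : Type*} [MeasurableSpace V] {μ : Measure V}
    {f : V → ℝ} (hfm : Measurable f) (hf2 : Integrable (fun v => f v ^ 2) μ) :
    Tendsto (fun n => ∫ v, SimpleFunc.approxOn f hfm univ 0 (mem_univ 0) n v ^ 2 ∂μ) atTop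
      (𝓝 (∫ v, f v ^ 2 ∂μ)) := by
  refine tendsto_integral_of_dominated_convergence (fun v => 4 * f v ^ 2)
    (fun n => ((SimpleFunc.measurable _).pow_const 2).aestronglyMeasurable) (hf2.const_mul 4)
    (fun n => ae_of_all _ fun v => ?_)
    (ae_of_all _ fun v => (SimpleFunc.tendsto_approxOn hfm (mem_univ 0) (by simp)).pow 2)
  have h : |SimpleFunc.approxOn f hfm univ 0 (mem_univ 0) n v| ≤ 2 * |f v| := by
    simpa [Real.norm_eq_abs, two_mul] using SimpleFunc.norm_approxOn_zero_le hfm (mem_univ 0) v n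
  rw [Real.norm_eq_abs, abs_of_nonneg (sq_nonneg _), ← sq_abs, ← sq_abs (f v)]
  nlinarith [abs_nonneg (SimpleFunc.approxOn f hfm univ 0 (mem_univ 0) n v)]

namespace IsPoissonRandomMeasure

variable {Ω V : Type*} [MeasurableSpace Ω] [MeasurableSpace V] {P : Measure Ω}
  {N : Ω → Measure V} {μ : Measure V} {A B : Set V}

lemma measurable (hN : IsPoissonRandomMeasure P N μ) : Measurable N :=
  Measure.measurable_of_measurable_coe _ hN.1

lemma indepFun_apply (hN : IsPoissonRandomMeasure P N μ) (hA : MeasurableSet A)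
    (hB : MeasurableSet B) (hAB : Disjoint A B) :
    IndepFun (fun ω => N ω A) (fun ω => N ω B) P := by
  have hdisj : Pairwise fun i j : Fin 2 => Disjoint (![A, B] i) (![A, B] j) := by
    intro i j hij
    fin_cases i <;> fin_cases j <;> simp_all [hAB.symm]
  simpa using (hN.2.2 2 ![A, B] (fun i => by fin_cases i <;> assumption) hdisj).indepFun
    zero_ne_one

variable [IsProbabilityMeasure P]

lemma hasLaw_apply (hN : IsPoissonRandomMeasure P N μ) (hA : MeasurableSet A) (hμA : μ A < ⊤) :
    HasLaw (fun ω => N ω A) Po(ℝ≥0∞, (μ A).toNNReal) P :=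
  hasLaw_map_natCast_of_measure_eq (hN.1 A hA) fun k => by
    rw [hN.2.1 A hA hμA k, poissonMeasure_singleton]
    rfl

lemma hasLaw_toReal_apply (hN : IsPoissonRandomMeasure P N μ) (hA : MeasurableSet A)
    (hμA : μ A < ⊤) : HasLaw (fun ω => (N ω).real A) Po(ℝ, (μ A).toNNReal) P :=
  hasLaw_toReal_map_natCast.comp (hN.hasLaw_apply hA hμA)

lemma lintegral_apply_of_lt_top (hN : IsPoissonRandomMeasure P N μ) (hA : MeasurableSet A)
    (hμA : μ A < ⊤) : ∫⁻ ω, N ω A ∂P = μ A := by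
  refine ((hN.hasLaw_apply hA hμA).lintegral_comp (f := id) aemeasurable_id).trans ?_
  rw [lintegral_map measurable_id measurable_from_nat]
  simp only [id, lintegral_natCast_poissonMeasure, ENNReal.coe_toNNReal hμA.ne]

lemma memLp_measureReal_apply (hN : IsPoissonRandomMeasure P N μ) (hA : MeasurableSet A)
    (hμA : μ A < ⊤) : MemLp (fun ω => (N ω).real A) 2 P := by
  have hX := hN.hasLaw_toReal_apply hA hμA
  have h : MemLp id 2 Po(ℝ, (μ A).toNNReal) :=
    (memLp_map_measure_iff aestronglyMeasurable_id measurable_from_nat.aemeasurable).2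
      (memLp_natCast_poissonMeasure _)
  rw [← hX.map_eq] at h
  exact (memLp_map_measure_iff aestronglyMeasurable_id hX.aemeasurable).1 h

lemma integral_measureReal_apply (hN : IsPoissonRandomMeasure P N μ) (hA : MeasurableSet A)
    (hμA : μ A < ⊤) : ∫ ω, (N ω).real A ∂P = μ.real A := by
  rw [(hN.hasLaw_toReal_apply hA hμA).integral_eq,
    integral_map (f := fun x : ℝ => x) measurable_from_nat.aemeasurable
      aestronglyMeasurable_id]
  exact integral_natCast_poissonMeasure _

lemma variance_measureReal_apply (hN : IsPoissonRandomMeasure P N μ) (hA : MeasurableSet A)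
    (hμA : μ A < ⊤) : Var[fun ω => (N ω).real A; P] = μ.real A := by
  rw [(hN.hasLaw_toReal_apply hA hμA).variance_eq,
    variance_map aemeasurable_id measurable_from_nat.aemeasurable]
  exact variance_natCast_poissonMeasure _

-- `a = 0` is exempt because the zero fibre of a simple function may have infinite mean measure.
lemma moments_measureReal_smul (hN : IsPoissonRandomMeasure P N μ) (hA : MeasurableSet A)
    {a : ℝ} (ha : a ≠ 0 → μ A < ⊤) :
    MemLp (fun ω => (N ω).real A • a) 2 P ∧ ∫ ω, (N ω).real A • a ∂P = μ.real A • a ∧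
      Var[fun ω => (N ω).real A • a; P] = μ.real A • a ^ 2 := by
  rcases eq_or_ne a 0 with rfl | ha0
  · simp only [smul_zero, zero_pow two_ne_zero]
    exact ⟨MemLp.zero, integral_zero Ω ℝ, variance_zero P⟩
  · have hμA := ha ha0
    simp only [smul_eq_mul]
    refine ⟨(hN.memLp_measureReal_apply hA hμA).mul_const a, ?_, ?_⟩
    · rw [integral_mul_const, hN.integral_measureReal_apply hA hμA]
    · rw [variance_mul_const, hN.variance_measureReal_apply hA hμA, mul_comm]

lemma moments_measureReal_fiber_smul (hN : IsPoissonRandomMeasure P N μ) {g : SimpleFunc V ℝ}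
    (hg : Integrable g μ) (a : ℝ) :
    MemLp (fun ω => (N ω).real (g ⁻¹' {a}) • a) 2 P ∧
      ∫ ω, (N ω).real (g ⁻¹' {a}) • a ∂P = μ.real (g ⁻¹' {a}) • a ∧
      Var[fun ω => (N ω).real (g ⁻¹' {a}) • a; P] = μ.real (g ⁻¹' {a}) • a ^ 2 :=
  hN.moments_measureReal_smul (g.measurableSet_fiber a)
    (g.measure_preimage_lt_top_of_integrable hg)

lemma memLp_simpleFunc_integral (hN : IsPoissonRandomMeasure P N μ) {g : SimpleFunc V ℝ}
    (hg : Integrable g μ) : MemLp (fun ω => g.integral (N ω)) 2 P := by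
  simp only [SimpleFunc.integral_eq]
  exact memLp_finsetSum _ fun a _ => (hN.moments_measureReal_fiber_smul hg a).1

lemma integral_simpleFunc_integral (hN : IsPoissonRandomMeasure P N μ) {g : SimpleFunc V ℝ}
    (hg : Integrable g μ) : ∫ ω, g.integral (N ω) ∂P = g.integral μ := by
  simp only [SimpleFunc.integral_eq]
  rw [integral_finsetSum _ fun a _ => (hN.moments_measureReal_fiber_smul hg a).1.integrable one_le_two]
  exact Finset.sum_congr rfl fun a _ => (hN.moments_measureReal_fiber_smul hg a).2.1

lemma variance_simpleFunc_integral (hN : IsPoissonRandomMeasure P N μ) {g : SimpleFunc V ℝ}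
    (hg : Integrable g μ) : Var[fun ω => g.integral (N ω); P] = ∫ v, g v ^ 2 ∂μ := by
  have hsum : (fun ω => g.integral (N ω))
      = ∑ a ∈ g.range, fun ω => (N ω).real (g ⁻¹' {a}) • a := by
    ext ω
    simp [SimpleFunc.integral_eq]
  have hindep : (g.range : Set ℝ).Pairwise fun a b =>
      IndepFun (fun ω => (N ω).real (g ⁻¹' {a}) • a) (fun ω => (N ω).real (g ⁻¹' {b}) • b) P :=
    fun a _ b _ hab => (hN.indepFun_apply (g.measurableSet_fiber a) (g.measurableSet_fiber b)
      ((disjoint_singleton.2 hab).preimage g)).comp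
        (ENNReal.measurable_toReal.smul_const a) (ENNReal.measurable_toReal.smul_const b)
  have hsq : Integrable (g.map (· ^ 2)) μ :=
    ((SimpleFunc.integrable_iff_finMeasSupp.1 hg).map (by simp)).integrable
  have hint_sq : ∫ v, g v ^ 2 ∂μ = ∑ a ∈ g.range, μ.real (g ⁻¹' {a}) • a ^ 2 := by
    rw [← SimpleFunc.map_integral g _ hg (by simp), SimpleFunc.integral_eq_integral _ hsq]
    rfl
  rw [hsum, IndepFun.variance_sum (fun a _ => (hN.moments_measureReal_fiber_smul hg a).1) hindep, hint_sq]
  exact Finset.sum_congr rfl fun a _ => (hN.moments_measureReal_fiber_smul hg a).2.2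

lemma lintegral_sq_simpleFunc_integral_sub (hN : IsPoissonRandomMeasure P N μ)
    {g : SimpleFunc V ℝ} (hg : Integrable g μ) :
    ∫⁻ ω, ENNReal.ofReal ((g.integral (N ω) - g.integral μ) ^ 2) ∂P
      = ENNReal.ofReal (∫ v, g v ^ 2 ∂μ) := by
  have hZ := hN.memLp_simpleFunc_integral hg
  rw [← hN.variance_simpleFunc_integral hg, variance_eq_integral hZ.aemeasurable,
    hN.integral_simpleFunc_integral hg]
  exact (ofReal_integral_eq_lintegral_ofReal (hZ.sub (memLp_const _)).integrable_sq
    (ae_of_all _ fun _ => sq_nonneg _)).symm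

variable [SigmaFinite μ] {f : V → ℝ}

lemma join_map_eq (hN : IsPoissonRandomMeasure P N μ) : (P.map N).join = μ := by
  refine (Measure.ext_iff_of_iUnion_eq_univ (iUnion_spanningSets μ)).2 fun n => ?_
  ext A hA
  have hAn := hA.inter (measurableSet_spanningSets μ n)
  rw [Measure.restrict_apply hA, Measure.restrict_apply hA, Measure.join_apply hAn,
    lintegral_map (Measure.measurable_coe hAn) hN.measurable,
    hN.lintegral_apply_of_lt_top hAn
      ((measure_mono inter_subset_right).trans_lt (measure_spanningSets_lt_top μ n))]

lemma lintegral_lintegral (hN : IsPoissonRandomMeasure P N μ) {g : V → ℝ≥0∞}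
    (hg : Measurable g) : ∫⁻ ω, ∫⁻ v, g v ∂(N ω) ∂P = ∫⁻ v, g v ∂μ := by
  rw [← lintegral_map (Measure.measurable_lintegral hg) hN.measurable,
    ← Measure.lintegral_join hg.aemeasurable, hN.join_map_eq]

lemma ae_integrable (hN : IsPoissonRandomMeasure P N μ) (hfm : Measurable f)
    (hf : Integrable f μ) : ∀ᵐ ω ∂P, Integrable f (N ω) := by
  have hfin := ae_lt_top ((Measure.measurable_lintegral hfm.enorm).comp hN.measurable)
    ((hN.lintegral_lintegral hfm.enorm).trans_lt hf.2).ne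
  filter_upwards [hfin] with ω hω
  exact ⟨hfm.aestronglyMeasurable, hω⟩

lemma ae_tendsto_approxOn_integral (hN : IsPoissonRandomMeasure P N μ) (hfm : Measurable f)
    (hf : Integrable f μ) : ∀ᵐ ω ∂P, Tendsto
      (fun n => (SimpleFunc.approxOn f hfm univ 0 (mem_univ 0) n).integral (N ω)) atTop
      (𝓝 (∫ v, f v ∂(N ω))) := by
  filter_upwards [hN.ae_integrable hfm hf] with ω hω
  exact tendsto_integral_approxOn_of_measurable hω hfm (by simp) _ (integrable_zero _ _ _)

lemma aemeasurable_integral (hN : IsPoissonRandomMeasure P N μ) (hfm : Measurable f)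
    (hf : Integrable f μ) : AEMeasurable (fun ω => ∫ v, f v ∂(N ω)) P :=
  aemeasurable_of_tendsto_metrizable_ae atTop (fun n => (hN.memLp_simpleFunc_integral
    (SimpleFunc.integrable_approxOn hfm hf _ (integrable_zero _ _ _) n)).1.aemeasurable)
    (hN.ae_tendsto_approxOn_integral hfm hf)

lemma lintegral_sq_integral_sub_le (hN : IsPoissonRandomMeasure P N μ) (hfm : Measurable f)
    (hf : Integrable f μ) (hf2 : Integrable (fun v => f v ^ 2) μ) :
    ∫⁻ ω, ENNReal.ofReal ((∫ v, f v ∂(N ω) - ∫ v, f v ∂μ) ^ 2) ∂P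
      ≤ ENNReal.ofReal (∫ v, f v ^ 2 ∂μ) := by
  set g : ℕ → SimpleFunc V ℝ := SimpleFunc.approxOn f hfm univ 0 (mem_univ 0)
  have hg : ∀ n, Integrable (g n) μ :=
    SimpleFunc.integrable_approxOn hfm hf _ (integrable_zero _ _ _)
  set Y : ℕ → Ω → ℝ≥0∞ := fun n ω => ENNReal.ofReal (((g n).integral (N ω) - (g n).integral μ) ^ 2)
  have hY : ∀ n, AEMeasurable (Y n) P := fun n =>
    (((hN.memLp_simpleFunc_integral (hg n)).1.aemeasurable.sub_const _).pow_const 2).ennreal_ofReal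
  have hlim_mean : Tendsto (fun n => (g n).integral μ) atTop (𝓝 (∫ v, f v ∂μ)) :=
    tendsto_integral_approxOn_of_measurable hf hfm (by simp) _ (integrable_zero _ _ _)
  calc ∫⁻ ω, ENNReal.ofReal ((∫ v, f v ∂(N ω) - ∫ v, f v ∂μ) ^ 2) ∂P
      = ∫⁻ ω, liminf (fun n => Y n ω) atTop ∂P := by
        refine lintegral_congr_ae ?_
        filter_upwards [hN.ae_tendsto_approxOn_integral hfm hf] with ω hω
        exact (((ENNReal.continuous_ofReal.tendsto _).comp
          ((hω.sub hlim_mean).pow 2)).liminf_eq).symm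
    _ ≤ liminf (fun n => ∫⁻ ω, Y n ω ∂P) atTop := lintegral_liminf_le' hY
    _ = ENNReal.ofReal (∫ v, f v ^ 2 ∂μ) := by
        simp only [Y, hN.lintegral_sq_simpleFunc_integral_sub (hg _)]
        exact ((ENNReal.continuous_ofReal.tendsto _).comp
          (tendsto_integral_sq_approxOn hfm hf2)).liminf_eq

lemma integrable_sq_integral_sub (hN : IsPoissonRandomMeasure P N μ) (hfm : Measurable f)
    (hf : Integrable f μ) (hf2 : Integrable (fun v => f v ^ 2) μ) :
    Integrable (fun ω => (∫ v, f v ∂(N ω) - ∫ v, f v ∂μ) ^ 2) P :=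
  ⟨((hN.aemeasurable_integral hfm hf).sub_const _).pow_const 2 |>.aestronglyMeasurable,
    (hasFiniteIntegral_iff_ofReal (ae_of_all _ fun _ => sq_nonneg _)).2
      ((hN.lintegral_sq_integral_sub_le hfm hf hf2).trans_lt ENNReal.ofReal_lt_top)⟩

lemma integral_sq_integral_sub_le (hN : IsPoissonRandomMeasure P N μ) (hfm : Measurable f)
    (hf : Integrable f μ) (hf2 : Integrable (fun v => f v ^ 2) μ) :
    ∫ ω, (∫ v, f v ∂(N ω) - ∫ v, f v ∂μ) ^ 2 ∂P ≤ ∫ v, f v ^ 2 ∂μ := by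
  rw [integral_eq_lintegral_of_nonneg_ae (ae_of_all _ fun _ => sq_nonneg _)
    (hN.integrable_sq_integral_sub hfm hf hf2).1]
  exact ENNReal.toReal_le_of_le_ofReal (integral_nonneg fun _ => sq_nonneg _)
    (hN.lintegral_sq_integral_sub_le hfm hf hf2)

end IsPoissonRandomMeasure

lemma indicator_prod_comp_snd {α β R : Type*} [MulZeroOneClass R] (A : Set α) (B : Set β)
    (g : β → R) (p : α × β) :
    (A ×ˢ B).indicator (fun p => g p.2) p = A.indicator 1 p.1 * B.indicator g p.2 := by
  by_cases h1 : p.1 ∈ A <;> by_cases h2 : p.2 ∈ B <;> simp [indicator, h1, h2]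

section LevyMeanMeasure

variable {T : ℝ} {D : Set ℝ} {η : Measure ℝ} {s : ℝ → ℝ}

instance [SigmaFinite η] : SigmaFinite (levyMeanMeasure T D η s) := by
  unfold levyMeanMeasure
  infer_instance

lemma toReal_ofReal_smul_indicator_ae_eq (hD : MeasurableSet D) (hs : ∀ x ∈ D, 0 ≤ s x)
    (g : ℝ → ℝ) : (fun x => (ENNReal.ofReal (s x)).toReal • D.indicator g x)
      =ᵐ[η.restrict D] fun x => g x * s x := by
  filter_upwards [ae_restrict_mem hD] with x hx
  rw [ENNReal.toReal_ofReal (hs x hx), indicator_of_mem hx, smul_eq_mul, mul_comm]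

lemma integral_indicator_levyMeanMeasure [SFinite η] (hT : 0 ≤ T) (hD : MeasurableSet D)
    (hs_meas : Measurable s) (hs : ∀ x ∈ D, 0 ≤ s x) (g : ℝ → ℝ) :
    ∫ p, (Icc 0 T ×ˢ D).indicator (fun p => g p.2) p ∂(levyMeanMeasure T D η s)
      = T * ∫ x in D, g x * s x ∂η := by
  simp_rw [indicator_prod_comp_snd, levyMeanMeasure]
  rw [integral_prod_mul, integral_withDensity_eq_integral_toReal_smul hs_meas.ennreal_ofReal
    (ae_of_all _ fun _ => ENNReal.ofReal_lt_top),
    integral_congr_ae (toReal_ofReal_smul_indicator_ae_eq hD hs g),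
    integral_indicator_one measurableSet_Icc]
  simp [hT]

lemma integrable_indicator_levyMeanMeasure (hD : MeasurableSet D) (hs_meas : Measurable s)
    (hs : ∀ x ∈ D, 0 ≤ s x) {g : ℝ → ℝ} (hg : IntegrableOn (fun x => g x * s x) D η) :
    Integrable ((Icc 0 T ×ˢ D).indicator fun p => g p.2) (levyMeanMeasure T D η s) := by
  simp_rw [funext (indicator_prod_comp_snd (Icc 0 T) D g), levyMeanMeasure]
  refine Integrable.mul_prod ?_ ?_
  · exact (integrable_const 1).indicator measurableSet_Icc
  · rw [integrable_withDensity_iff_integrable_smul' hs_meas.ennreal_ofReal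
      (ae_of_all _ fun _ => ENNReal.ofReal_lt_top)]
    exact hg.congr (toReal_ofReal_smul_indicator_ae_eq hD hs g).symm

end LevyMeanMeasure

section SquareIntegrable

variable {α ι : Type*} [MeasurableSpace α] {ν : Measure α} [Fintype ι] {φ : ι → α → ℝ}

lemma memLp_two_of_integral_mul_self_ne_zero {f : α → ℝ} (hf : AEStronglyMeasurable f ν)
    (h : ∫ x, f x * f x ∂ν ≠ 0) : MemLp f 2 ν :=
  (memLp_two_iff_integrable_sq hf).2 (by simpa only [sq] using Integrable.of_integral_ne_zero h)

lemma integral_mul_le_essSup_mul_integral {w f : α → ℝ} (hw : 0 ≤ᵐ[ν] w) (hw_int : Integrable w ν)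
    (hwf : Integrable (fun x => w x * f x) ν) (hf : IsBoundedUnder (· ≤ ·) (ae ν) f) :
    ∫ x, w x * f x ∂ν ≤ essSup f ν * ∫ x, w x ∂ν := by
  rw [← integral_const_mul]
  refine integral_mono_ae hwf (hw_int.const_mul _) ?_
  filter_upwards [hw, ae_le_essSup hf] with x hwx hfx
  rw [mul_comm (essSup f ν)]
  exact mul_le_mul_of_nonneg_left hfx hwx

lemma integral_sum_mul_mul {f : α → ℝ} (hf : ∀ i, Integrable (fun x => φ i x * f x) ν)
    (c : ι → ℝ) : ∫ x, (∑ i, c i * φ i x) * f x ∂ν = ∑ i, c i * ∫ x, φ i x * f x ∂ν := by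
  simp_rw [Finset.sum_mul, mul_assoc]
  rw [integral_finsetSum _ fun i _ => (hf i).const_mul (c i)]
  simp_rw [integral_const_mul]

variable [DecidableEq ι] (hφ2 : ∀ i, MemLp (φ i) 2 ν)
  (hφ : ∀ i j, ∫ x, φ i x * φ j x ∂ν = if i = j then 1 else 0)
include hφ2 hφ

lemma integral_sum_mul_sq (c : ι → ℝ) : ∫ x, (∑ i, c i * φ i x) ^ 2 ∂ν = ∑ i, c i ^ 2 := by
  have hcoord : ∀ j, ∫ x, φ j x * ∑ i, c i * φ i x ∂ν = c j := fun j => by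
    simp_rw [mul_comm (φ j _)]
    rw [integral_sum_mul_mul (fun i => (hφ2 i).integrable_mul (hφ2 j)), Finset.sum_eq_single j]
    · simp [hφ]
    · intro i _ hij; simp [hφ, hij]
    · simp
  simp_rw [sq]
  rw [integral_sum_mul_mul fun j => (hφ2 j).integrable_mul (memLp_finsetSum _ fun i _ =>
    (hφ2 i).const_mul (c i))]
  simp_rw [hcoord]

lemma integral_sq_sub_sum_mul {f : α → ℝ} (hf : MemLp f 2 ν) (c : ι → ℝ) :
    ∫ x, (f x - ∑ i, c i * φ i x) ^ 2 ∂ν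
      = ∫ x, f x ^ 2 ∂ν - 2 * ∑ i, c i * ∫ x, φ i x * f x ∂ν + ∑ i, c i ^ 2 := by
  have hg : MemLp (fun x => ∑ i, c i * φ i x) 2 ν :=
    memLp_finsetSum _ fun i _ => (hφ2 i).const_mul (c i)
  have hcross : Integrable (fun x => 2 * ((∑ i, c i * φ i x) * f x)) ν :=
    (hg.integrable_mul hf).const_mul 2
  have hexpand : ∀ x, (f x - ∑ i, c i * φ i x) ^ 2
      = f x ^ 2 - 2 * ((∑ i, c i * φ i x) * f x) + (∑ i, c i * φ i x) ^ 2 := fun x => by ring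
  have hdiff : Integrable (fun x => f x ^ 2 - 2 * ((∑ i, c i * φ i x) * f x)) ν :=
    hf.integrable_sq.sub hcross
  simp_rw [hexpand]
  rw [integral_add hdiff hg.integrable_sq,
    integral_sub hf.integrable_sq hcross, integral_const_mul,
    integral_sum_mul_mul (fun i => (hφ2 i).integrable_mul hf), integral_sum_mul_sq hφ2 hφ]

lemma integral_sq_sub_sum_mul_eq_add {f : α → ℝ} (hf : MemLp f 2 ν) (c : ι → ℝ) :
    ∫ x, (f x - ∑ i, c i * φ i x) ^ 2 ∂ν
      = ∫ x, (f x - ∑ i, (∫ y, φ i y * f y ∂ν) * φ i x) ^ 2 ∂ν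
        + ∑ i, (c i - ∫ y, φ i y * f y ∂ν) ^ 2 := by
  set b : ι → ℝ := fun i => ∫ y, φ i y * f y ∂ν
  have hsum : ∑ i, (c i - b i) ^ 2 = ∑ i, c i ^ 2 - 2 * ∑ i, c i * b i + ∑ i, b i ^ 2 := by
    simp only [sub_sq, Finset.sum_add_distrib, Finset.sum_sub_distrib, Finset.mul_sum, mul_assoc]
  rw [integral_sq_sub_sum_mul hφ2 hφ hf, integral_sq_sub_sum_mul hφ2 hφ hf, hsum]
  simp only [← sq]
  ring

end SquareIntegrable

-- `β̂ᵢ = coeffEstimator T D (J ω) φᵢ`.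
def coeffEstimator (T : ℝ) (D : Set ℝ) (ν : Measure (ℝ × ℝ)) (g : ℝ → ℝ) : ℝ :=
  (1 / T) * ∫ p in Icc 0 T ×ˢ D, g p.2 ∂ν

namespace IsPoissonRandomMeasure

variable {Ω : Type*} [MeasurableSpace Ω] {P : Measure Ω} [IsProbabilityMeasure P]
  {J : Ω → Measure (ℝ × ℝ)} {T : ℝ} {D : Set ℝ} {η : Measure ℝ} [SigmaFinite η] {s g : ℝ → ℝ}

lemma integrable_and_integral_sq_coeffEstimator_sub_le
    (hJ : IsPoissonRandomMeasure P J (levyMeanMeasure T D η s)) (hT : 0 < T)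
    (hD : MeasurableSet D) (hs_meas : Measurable s) (hs : ∀ x ∈ D, 0 ≤ s x) (hg : Measurable g)
    (hg1 : IntegrableOn (fun x => g x * s x) D η)
    (hg2 : IntegrableOn (fun x => g x ^ 2 * s x) D η) :
    Integrable (fun ω => (coeffEstimator T D (J ω) g - ∫ x in D, g x * s x ∂η) ^ 2) P ∧
      ∫ ω, (coeffEstimator T D (J ω) g - ∫ x in D, g x * s x ∂η) ^ 2 ∂P
        ≤ (∫ x in D, g x ^ 2 * s x ∂η) / T := by
  set f : ℝ × ℝ → ℝ := (Icc 0 T ×ˢ D).indicator fun p => g p.2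
  have hfm : Measurable f := (hg.comp measurable_snd).indicator (measurableSet_Icc.prod hD)
  have hf_sq : ∀ p, f p ^ 2 = (Icc 0 T ×ˢ D).indicator (fun p => g p.2 ^ 2) p := fun p =>
    (congr_fun (indicator_comp_of_zero (g := fun y : ℝ => y ^ 2) (by simp)) p).symm
  have hf1 := integrable_indicator_levyMeanMeasure (T := T) hD hs_meas hs hg1
  have hf2 : Integrable (fun p => f p ^ 2) (levyMeanMeasure T D η s) := by
    simpa only [hf_sq] using integrable_indicator_levyMeanMeasure hD hs_meas hs hg2
  have hrescale : ∀ ω, (coeffEstimator T D (J ω) g - ∫ x in D, g x * s x ∂η) ^ 2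
      = (1 / T ^ 2) * (∫ p, f p ∂(J ω) - ∫ p, f p ∂(levyMeanMeasure T D η s)) ^ 2 := fun ω => by
    rw [coeffEstimator, integral_indicator (measurableSet_Icc.prod hD),
      integral_indicator_levyMeanMeasure hT.le hD hs_meas hs]
    field_simp
  simp_rw [hrescale]
  refine ⟨(hJ.integrable_sq_integral_sub hfm hf1 hf2).const_mul _, ?_⟩
  rw [integral_const_mul]
  calc 1 / T ^ 2 * ∫ ω, (∫ p, f p ∂(J ω) - ∫ p, f p ∂(levyMeanMeasure T D η s)) ^ 2 ∂P
      ≤ 1 / T ^ 2 * ∫ p, f p ^ 2 ∂(levyMeanMeasure T D η s) :=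
        mul_le_mul_of_nonneg_left (hJ.integral_sq_integral_sub_le hfm hf1 hf2) (by positivity)
    _ = (∫ x in D, g x ^ 2 * s x ∂η) / T := by
        have h := integral_indicator_levyMeanMeasure (η := η) hT.le hD hs_meas hs fun x => g x ^ 2
        simp_rw [hf_sq, h]
        field_simp

lemma integrable_and_integral_sq_coeffEstimator_sub_le_essSup
    (hJ : IsPoissonRandomMeasure P J (levyMeanMeasure T D η s)) (hT : 0 < T)
    (hD : MeasurableSet D) (hs_meas : Measurable s) (hs : ∀ x ∈ D, 0 ≤ s x) {M : ℝ}
    (hM : ∀ x ∈ D, s x ≤ M) (hsL2 : MemLp s 2 (η.restrict D)) (hg : Measurable g)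
    (hg_norm : ∫ x in D, g x * g x ∂η = 1) :
    Integrable (fun ω => (coeffEstimator T D (J ω) g - ∫ x in D, g x * s x ∂η) ^ 2) P ∧
      ∫ ω, (coeffEstimator T D (J ω) g - ∫ x in D, g x * s x ∂η) ^ 2 ∂P
        ≤ essSup s (η.restrict D) / T := by
  have hgL2 : MemLp g 2 (η.restrict D) :=
    memLp_two_of_integral_mul_self_ne_zero hg.aestronglyMeasurable (by simp [hg_norm])
  have hg2s : IntegrableOn (fun x => g x ^ 2 * s x) D η :=
    hgL2.integrable_sq.mul_bdd hs_meas.aestronglyMeasurable <| by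
      filter_upwards [ae_restrict_mem hD] with x hx
      rw [Real.norm_of_nonneg (hs x hx)]
      exact hM x hx
  obtain ⟨hint, hle⟩ :=
    hJ.integrable_and_integral_sq_coeffEstimator_sub_le hT hD hs_meas hs hg
      (hgL2.integrable_mul hsL2) hg2s
  refine ⟨hint, hle.trans (div_le_div_of_nonneg_right ?_ hT.le)⟩
  calc ∫ x in D, g x ^ 2 * s x ∂η ≤ essSup s (η.restrict D) * ∫ x in D, g x ^ 2 ∂η :=
        integral_mul_le_essSup_mul_integral (ae_of_all _ fun _ => sq_nonneg _)
          hgL2.integrable_sq hg2s ⟨M, (ae_restrict_mem hD).mono hM⟩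
    _ = essSup s (η.restrict D) := by simp [sq, hg_norm]

end IsPoissonRandomMeasure

theorem projection_estimator_risk_decomposition_general
    {Ω : Type*} [MeasurableSpace Ω] (P : Measure Ω) [IsProbabilityMeasure P]
    (T : ℝ) (hT : 0 < T)
    (D : Set ℝ) (hD : MeasurableSet D)
    (η : Measure ℝ) [SigmaFinite η]
    (s : ℝ → ℝ) (hs_meas : Measurable s) (hs_pos : ∀ x ∈ D, 0 < s x)
    (hs_bdd : ∃ M : ℝ, ∀ x ∈ D, s x ≤ M)
    (hs_sq : IntegrableOn (fun x => s x ^ 2) D η)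
    (J : Ω → Measure (ℝ × ℝ))
    (hJ : IsPoissonRandomMeasure P J (levyMeanMeasure T D η s))
    (d : ℕ) (φ : Fin d → ℝ → ℝ)
    (hφ_meas : ∀ i, Measurable (φ i))
    (hφ_on : ∀ i j, ∫ x in D, φ i x * φ j x ∂η = if i = j then 1 else 0)
    (βhat : Fin d → Ω → ℝ)
    (hβhat : ∀ i ω, βhat i ω = (1 / T) * ∫ p in Icc 0 T ×ˢ D, φ i p.2 ∂(J ω))
    (shat : Ω → ℝ → ℝ)
    (hshat : ∀ ω x, shat ω x = ∑ i, βhat i ω * φ i x)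
    (sperp : ℝ → ℝ)
    (hsperp : ∀ x, sperp x = ∑ i, (∫ y in D, φ i y * s y ∂η) * φ i x)
    (χsq : Ω → ℝ)
    (hχ : ∀ ω, χsq ω = ∫ x in D, (shat ω x - sperp x) ^ 2 ∂η) :
    (∫ ω, (∫ x in D, (s x - shat ω x) ^ 2 ∂η) ∂P
        = (∫ x in D, (s x - sperp x) ^ 2 ∂η) + ∫ ω, χsq ω ∂P) ∧
      ∫ ω, χsq ω ∂P ≤ essSup s (η.restrict D) * d / T := by
  obtain ⟨M, hM⟩ := hs_bdd
  have hs_nonneg : ∀ x ∈ D, 0 ≤ s x := fun x hx => (hs_pos x hx).le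
  have hsL2 : MemLp s 2 (η.restrict D) :=
    (memLp_two_iff_integrable_sq hs_meas.aestronglyMeasurable).2 hs_sq
  have hφL2 : ∀ i, MemLp (φ i) 2 (η.restrict D) := fun i =>
    memLp_two_of_integral_mul_self_ne_zero (hφ_meas i).aestronglyMeasurable (by simp [hφ_on])
  set b : Fin d → ℝ := fun i => ∫ y in D, φ i y * s y ∂η
  have hcoef : ∀ i, Integrable (fun ω => (βhat i ω - b i) ^ 2) P ∧
      ∫ ω, (βhat i ω - b i) ^ 2 ∂P ≤ essSup s (η.restrict D) / T := fun i => by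
    simpa only [coeffEstimator, ← hβhat] using
      hJ.integrable_and_integral_sq_coeffEstimator_sub_le_essSup hT hD hs_meas hs_nonneg hM hsL2
        (hφ_meas i) (by simpa using hφ_on i i)
  have hχ_sum : ∀ ω, χsq ω = ∑ i, (βhat i ω - b i) ^ 2 := fun ω => by
    simp only [hχ, hshat, hsperp, ← Finset.sum_sub_distrib, ← sub_mul]
    exact integral_sum_mul_sq hφL2 hφ_on _
  have hrisk : ∀ ω, ∫ x in D, (s x - shat ω x) ^ 2 ∂η
      = (∫ x in D, (s x - sperp x) ^ 2 ∂η) + χsq ω := fun ω => by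
    simp only [hshat, hsperp, hχ_sum]
    exact integral_sq_sub_sum_mul_eq_add hφL2 hφ_on hsL2 (fun i => βhat i ω)
  have hχ_int : Integrable χsq P := by
    rw [funext hχ_sum]
    exact integrable_finsetSum _ fun i _ => (hcoef i).1
  refine ⟨?_, ?_⟩
  · rw [integral_congr_ae (ae_of_all _ hrisk), integral_add (integrable_const _) hχ_int]
    simp
  · rw [funext hχ_sum, integral_finsetSum _ fun i _ => (hcoef i).1]
    calc _ ≤ ∑ _i : Fin d, essSup s (η.restrict D) / T := Finset.sum_le_sum fun i _ => (hcoef i).2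
      _ = essSup s (η.restrict D) * d / T := by simp [mul_div_assoc, mul_comm]

/-- Risk decomposition `E[‖s − ŝ‖²_η] = ‖s − s^⊥‖²_η + E[χ²]`, together with the
variance bound `E[χ²] ≤ ‖s‖_∞ · d / T`, where `‖s‖_∞` is the `η`-essential supremum
of `s` on `D`. -/
theorem projection_estimator_risk_decomposition
    {Ω : Type*} [MeasurableSpace Ω] (P : Measure Ω) [IsProbabilityMeasure P]
    (T : ℝ) (hT : 0 < T)
    (D : Set ℝ) (hD : MeasurableSet D) (hD0 : (0 : ℝ) ∉ D)
    (η : Measure ℝ) [SigmaFinite η]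
    (s : ℝ → ℝ) (hs_meas : Measurable s) (hs_pos : ∀ x ∈ D, 0 < s x)
    (hs_bdd : ∃ M : ℝ, ∀ x ∈ D, s x ≤ M)
    (hs_sq : IntegrableOn (fun x => s x ^ 2) D η)
    (J : Ω → Measure (ℝ × ℝ))
    (hJ : IsPoissonRandomMeasure P J (levyMeanMeasure T D η s))
    (d : ℕ) (φ : Fin d → ℝ → ℝ)
    (hφ_meas : ∀ i, Measurable (φ i))
    (hφ_on : ∀ i j, ∫ x in D, φ i x * φ j x ∂η = if i = j then 1 else 0)
    (βhat : Fin d → Ω → ℝ)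
    (hβhat : ∀ i ω, βhat i ω = (1 / T) * ∫ p in Icc 0 T ×ˢ D, φ i p.2 ∂(J ω))
    (shat : Ω → ℝ → ℝ)
    (hshat : ∀ ω x, shat ω x = ∑ i, βhat i ω * φ i x)
    (sperp : ℝ → ℝ)
    (hsperp : ∀ x, sperp x = ∑ i, (∫ y in D, φ i y * s y ∂η) * φ i x)
    (χsq : Ω → ℝ)
    (hχ : ∀ ω, χsq ω = ∫ x in D, (shat ω x - sperp x) ^ 2 ∂η) :
    (∫ ω, (∫ x in D, (s x - shat ω x) ^ 2 ∂η) ∂P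
        = (∫ x in D, (s x - sperp x) ^ 2 ∂η) + ∫ ω, χsq ω ∂P) ∧
      ∫ ω, χsq ω ∂P ≤ essSup s (η.restrict D) * d / T :=
  projection_estimator_risk_decomposition_general P T hT D hD η s hs_meas hs_pos hs_bdd hs_sq J hJ d
    φ hφ_meas hφ_on βhat hβhat shat hshat sperp hsperp χsq hχ
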